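/- arXiv:math/0611816 — 3 statements merged into one kernel-verified Lean document; each statement's English description precedes it below -/
import Mathlib

section
/- Define the sequence λₙ by λ₀² = p₁² + 4τ(τ−1), λ₁² = p₁² + p₂² + 4τ(τ−1), and λₙ² = 4τ(τ−1) + p_{n+1}² + pₙ² − pₙ²p_{n−1}²/λ_{n−2}² for n ≥ 2, where τ > 1 and 0 < pₙ with pₙ² ≤ 1/4 for all n (so that the Jacobi matrix with zero diagonal and off-diagonals pₙ has norm ≤ 1). Then λₙ² ≥ 4τ(τ−1) > 0 for all n, so the recursion is well defined. -/
/-! The induction runs on the stronger claim `c + p_{n+1}² ≤ λₙ²` with `c = 4τ(τ−1) ≥ 0`: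
it gives `p_{n−1}² ≤ λ_{n−2}²`, so the subtracted term `pₙ²p_{n−1}²/λ_{n−2}²` is at most `pₙ²`
and cancels against the `+ pₙ²` of the recursion. -/

lemma sq_mul_sq_div_le_sq (x y d : ℝ) (h : y ^ 2 ≤ d) : x ^ 2 * y ^ 2 / d ≤ x ^ 2 :=
  div_le_of_le_mul₀ ((sq_nonneg y).trans h) (sq_nonneg x)
    (mul_le_mul_of_nonneg_left h (sq_nonneg x))

lemma add_sq_succ_le_of_recursion (c : ℝ) (hc : 0 ≤ c) (p lam : ℕ → ℝ)
    (h0 : lam 0 ^ 2 = p 1 ^ 2 + c)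
    (h1 : lam 1 ^ 2 = p 1 ^ 2 + p 2 ^ 2 + c)
    (hrec : ∀ n, 2 ≤ n →
      lam n ^ 2 = c + p (n + 1) ^ 2 + p n ^ 2 - p n ^ 2 * p (n - 1) ^ 2 / lam (n - 2) ^ 2) :
    ∀ n, c + p (n + 1) ^ 2 ≤ lam n ^ 2 := by
  intro n
  induction n using Nat.twoStepInduction with
  | zero => rw [h0, add_comm]
  | one => rw [h1]; linarith [sq_nonneg (p 1)]
  | more m ih _ =>
    have hsub : p (m + 2) ^ 2 * p (m + 1) ^ 2 / lam m ^ 2 ≤ p (m + 2) ^ 2 :=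
      sq_mul_sq_div_le_sq _ _ _ (by linarith)
    rw [hrec (m + 2) (by omega), show m + 2 - 1 = m + 1 by omega, Nat.add_sub_cancel]
    linarith

theorem lambda_recursion_bounded_below_general (τ : ℝ) (hτ : 1 < τ)
    (p : ℕ → ℝ)
    (lam : ℕ → ℝ)
    (h0 : lam 0 ^ 2 = p 1 ^ 2 + 4 * τ * (τ - 1))
    (h1 : lam 1 ^ 2 = p 1 ^ 2 + p 2 ^ 2 + 4 * τ * (τ - 1))
    (hrec : ∀ n, 2 ≤ n →
      lam n ^ 2 = 4 * τ * (τ - 1) + p (n + 1) ^ 2 + p n ^ 2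
        - p n ^ 2 * p (n - 1) ^ 2 / lam (n - 2) ^ 2) :
    (0 < 4 * τ * (τ - 1)) ∧ ∀ n, 4 * τ * (τ - 1) ≤ lam n ^ 2 := by
  have hc : 0 < 4 * τ * (τ - 1) := by nlinarith
  have hbound := add_sq_succ_le_of_recursion _ hc.le p lam h0 h1 hrec
  exact ⟨hc, fun n => (le_add_of_nonneg_right (sq_nonneg (p (n + 1)))).trans (hbound n)⟩

/-- Define `λₙ` by `λ₀² = p₁² + 4τ(τ−1)`, `λ₁² = p₁² + p₂² + 4τ(τ−1)`, and
`λₙ² = 4τ(τ−1) + p_{n+1}² + pₙ² − pₙ²p_{n−1}²/λ_{n−2}²` for `n ≥ 2`, where `τ > 1` and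
the `pₙ > 0` satisfy `pₙ² + p_{n+1}² ≤ 1` (so the corresponding zero-diagonal Jacobi
matrix has norm ≤ 1). Then `λₙ² ≥ 4τ(τ−1) > 0` for all `n`, so the recursion is
well defined. -/
theorem lambda_recursion_bounded_below (τ : ℝ) (hτ : 1 < τ)
    (p : ℕ → ℝ) (hp : ∀ n, 0 < p n) (hpnorm : ∀ n, p n ^ 2 + p (n + 1) ^ 2 ≤ 1)
    (lam : ℕ → ℝ) (hlampos : ∀ n, 0 < lam n)
    (h0 : lam 0 ^ 2 = p 1 ^ 2 + 4 * τ * (τ - 1))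
    (h1 : lam 1 ^ 2 = p 1 ^ 2 + p 2 ^ 2 + 4 * τ * (τ - 1))
    (hrec : ∀ n, 2 ≤ n →
      lam n ^ 2 = 4 * τ * (τ - 1) + p (n + 1) ^ 2 + p n ^ 2
        - p n ^ 2 * p (n - 1) ^ 2 / lam (n - 2) ^ 2) :
    (0 < 4 * τ * (τ - 1)) ∧ ∀ n, 4 * τ * (τ - 1) ≤ lam n ^ 2 :=
  lambda_recursion_bounded_below_general τ hτ p lam h0 h1 hrec
end

section
/- If Φ is an upper triangular matrix (operator) with Φ*Φ = J² + 4τ(τ−1)I for a bounded self-adjoint J with ‖J‖ ≤ 1 and τ > 1, and J_* := ΦJΦ⁻¹, then J_* is self-adjoint and satisfies ΦΦ* = J_*² + 4τ(τ−1)I. -/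
open ContinuousLinearMap

/-!
`J` commutes with `Φ*Φ = J² + 4τ(τ−1)I`, so `Φ*⁻¹ (Φ*Φ J) Φ⁻¹ = Φ*⁻¹ (J Φ*Φ) Φ⁻¹` gives
`ΦJΦ⁻¹ = Φ*⁻¹ J Φ*`, whose adjoint is itself. Conjugating `Φ*Φ = J² + 4τ(τ−1)I` by `Φ`
gives `ΦΦ* = (ΦJΦ⁻¹)² + 4τ(τ−1)I`.
-/

section ConjugateByInverse

variable {R : Type*} [Ring R] {a b : R}

theorem conj_pow_add_smul_one {𝕜 : Type*} [SMul 𝕜 R] [SMulCommClass 𝕜 R R]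
    [IsScalarTower 𝕜 R R] (hab : a * b = 1) (hba : b * a = 1) (j : R) (n : ℕ) (c : 𝕜) :
    a * (j ^ n + c • 1) * b = (a * j * b) ^ n + c • 1 := by
  have hpow : (a * j * b) ^ n = a * j ^ n * b := Units.conj_pow ⟨a, b, hab, hba⟩ j n
  rw [hpow, mul_add, add_mul, mul_smul_comm, smul_mul_assoc, mul_one, hab]

theorem IsSelfAdjoint.conj_of_commute_star_mul_self [StarRing R] {j : R} (hj : IsSelfAdjoint j)
    (hab : a * b = 1) (hcomm : Commute j (star a * a)) : IsSelfAdjoint (a * j * b) := by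
  have hstar : star b * star a = 1 := by rw [← star_mul, hab, star_one]
  have hconj : a * j * b = star b * j * star a :=
    calc a * j * b
        = star b * ((star a * a) * j) * b := by simp only [← mul_assoc, hstar, one_mul]
      _ = star b * (j * (star a * a)) * b := by rw [hcomm.eq]
      _ = star b * j * star a := by simp only [mul_assoc, hab, mul_one]
  show star (a * j * b) = a * j * b
  rw [star_mul, star_mul, hj.star_eq, hconj, mul_assoc]

end ConjugateByInverse

theorem darboux_factorization_general
    (J : lp (fun _ : ℕ => ℂ) 2 →L[ℂ] lp (fun _ : ℕ => ℂ) 2)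
    (hJ : IsSelfAdjoint J)
    (τ : ℝ)
    (Φ Φinv : lp (fun _ : ℕ => ℂ) 2 →L[ℂ] lp (fun _ : ℕ => ℂ) 2)
    (hΦ1 : Φ * Φinv = 1) (hΦ2 : Φinv * Φ = 1)
    (hΦ : adjoint Φ * Φ
      = J ^ 2 + ((4 * τ * (τ - 1) : ℝ) : ℂ) • (1 : lp (fun _ : ℕ => ℂ) 2 →L[ℂ] lp (fun _ : ℕ => ℂ) 2)) :
    IsSelfAdjoint (Φ * J * Φinv) ∧
    Φ * adjoint Φ
      = (Φ * J * Φinv) ^ 2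
        + ((4 * τ * (τ - 1) : ℝ) : ℂ) • (1 : lp (fun _ : ℕ => ℂ) 2 →L[ℂ] lp (fun _ : ℕ => ℂ) 2) := by
  have hcomm : Commute J (star Φ * Φ) := by
    rw [star_eq_adjoint, hΦ]
    exact ((Commute.refl J).pow_right 2).add_right ((Commute.one_right J).smul_right _)
  refine ⟨hJ.conj_of_commute_star_mul_self hΦ1 hcomm, ?_⟩
  calc Φ * adjoint Φ
      = Φ * (adjoint Φ * Φ) * Φinv := by rw [mul_assoc, mul_assoc, hΦ1, mul_one]
    _ = _ := by rw [hΦ, conj_pow_add_smul_one hΦ1 hΦ2]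

/-- If `Φ` is an upper triangular invertible operator on `ℓ²(ℤ₊)` with
`Φ*Φ = J² + 4τ(τ−1)I` for a bounded self-adjoint `J` with `‖J‖ ≤ 1` and `τ > 1`,
and `J_* := ΦJΦ⁻¹`, then `J_*` is self-adjoint and `ΦΦ* = J_*² + 4τ(τ−1)I`. -/
theorem darboux_factorization
    (J : lp (fun _ : ℕ => ℂ) 2 →L[ℂ] lp (fun _ : ℕ => ℂ) 2)
    (hJ : IsSelfAdjoint J) (hJnorm : ‖J‖ ≤ 1)
    (τ : ℝ) (hτ : 1 < τ)
    (Φ Φinv : lp (fun _ : ℕ => ℂ) 2 →L[ℂ] lp (fun _ : ℕ => ℂ) 2)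
    (hΦ1 : Φ * Φinv = 1) (hΦ2 : Φinv * Φ = 1)
    (hTri : ∀ m n : ℕ, n < m →
      (inner ℂ (lp.single 2 m (1 : ℂ)) (Φ (lp.single 2 n (1 : ℂ))) : ℂ) = 0)
    (hΦ : adjoint Φ * Φ
      = J ^ 2 + ((4 * τ * (τ - 1) : ℝ) : ℂ) • (1 : lp (fun _ : ℕ => ℂ) 2 →L[ℂ] lp (fun _ : ℕ => ℂ) 2)) :
    IsSelfAdjoint (Φ * J * Φinv) ∧
    Φ * adjoint Φ
      = (Φ * J * Φinv) ^ 2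
        + ((4 * τ * (τ - 1) : ℝ) : ℂ) • (1 : lp (fun _ : ℕ => ℂ) 2 →L[ℂ] lp (fun _ : ℕ => ℂ) 2) :=
  darboux_factorization_general J hJ τ Φ Φinv hΦ1 hΦ2 hΦ
end

section
/- Let V : ℓ²(ℤ₊) → ℓ²(ℤ₊) be the isometry V|k⟩ = |dk⟩ and let J be a bounded self-adjoint operator. If V*(z−J)⁻¹V = (T'(z)/d)·(T(z) − J̃)⁻¹ holds for all z in a neighborhood of ∞ (as an identity of operator-valued analytic functions), then V*T(J) = J̃V* and V*((T(z)−T(J))/(z−J))V = T'(z)/d · I. -/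
open Polynomial ContinuousLinearMap Filter Finset

set_option linter.unusedSectionVars false
set_option linter.unusedVariables false
set_option maxHeartbeats 8000000

section Helpers

variable {A : Type*} [NormedRing A] [NormedAlgebra ℂ A] [CompleteSpace A]

lemma hlp_smul_one_sub_eq (a : A) {w : ℂ} (hw : w ≠ 0) :
    w • (1 : A) - a = (w • 1) * (1 - w⁻¹ • a) := by
  rw [mul_sub, mul_one, smul_mul_assoc, one_mul, smul_smul, mul_inv_cancel₀ hw, one_smul]

lemma hlp_isUnit_smul_one {w : ℂ} (hw : w ≠ 0) : IsUnit (w • (1 : A)) :=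
  ⟨⟨w • 1, w⁻¹ • 1,
    by rw [smul_mul_assoc, one_mul, smul_smul, mul_inv_cancel₀ hw, one_smul],
    by rw [smul_mul_assoc, one_mul, smul_smul, inv_mul_cancel₀ hw, one_smul]⟩, rfl⟩

lemma hlp_norm_inv_smul_lt {a : A} {w : ℂ} (h : ‖a‖ < ‖w‖) : ‖w⁻¹ • a‖ < 1 := by
  have hw0 : 0 < ‖w‖ := lt_of_le_of_lt (norm_nonneg a) h
  rw [norm_smul, norm_inv]
  rw [inv_mul_lt_iff₀ hw0, mul_one]
  exact h

lemma hlp_isUnit_smul_one_sub {a : A} {w : ℂ} (h : ‖a‖ < ‖w‖) :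
    IsUnit (w • (1 : A) - a) := by
  have hw : w ≠ 0 := by
    intro hw0; rw [hw0, norm_zero] at h; exact absurd h (not_lt.2 (norm_nonneg a))
  rw [hlp_smul_one_sub_eq a hw]
  exact (hlp_isUnit_smul_one hw).mul (Units.oneSub (w⁻¹ • a) (hlp_norm_inv_smul_lt h)).isUnit

lemma hlp_ringInverse_eq {a : A} {w : ℂ} (h : ‖a‖ < ‖w‖) :
    Ring.inverse (w • (1 : A) - a) = w⁻¹ • Ring.inverse (1 - w⁻¹ • a) := by
  have hw : w ≠ 0 := by
    intro hw0; rw [hw0, norm_zero] at h; exact absurd h (not_lt.2 (norm_nonneg a))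
  have hu2 : IsUnit ((1 : A) - w⁻¹ • a) :=
    (Units.oneSub (w⁻¹ • a) (hlp_norm_inv_smul_lt h)).isUnit
  have hu : IsUnit (w • (1 : A) - a) := hlp_isUnit_smul_one_sub h
  have key : (w • (1 : A) - a) * (w⁻¹ • Ring.inverse (1 - w⁻¹ • a)) = 1 := by
    rw [hlp_smul_one_sub_eq a hw, mul_assoc, mul_smul_comm,
      Ring.mul_inverse_cancel _ hu2, smul_mul_assoc, one_mul, smul_smul,
      mul_inv_cancel₀ hw, one_smul]
  calc Ring.inverse (w • (1 : A) - a)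
      = Ring.inverse (w • (1 : A) - a) *
          ((w • (1 : A) - a) * (w⁻¹ • Ring.inverse (1 - w⁻¹ • a))) := by
        rw [key, mul_one]
    _ = w⁻¹ • Ring.inverse (1 - w⁻¹ • a) := by
        rw [← mul_assoc, Ring.inverse_mul_cancel _ hu, one_mul]

lemma hlp_tendsto_inv_ofReal : Tendsto (fun t : ℝ => ((t : ℂ))⁻¹) atTop (nhds 0) := by
  have h := (Complex.continuous_ofReal.tendsto (0 : ℝ)).comp tendsto_inv_atTop_zero
  simp only [Function.comp_def] at h
  simpa using h.congr (fun t => by rw [Complex.ofReal_inv])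

lemma hlp_tendsto_oneSub_inverse (a : A) :
    Tendsto (fun t : ℝ => Ring.inverse ((1 : A) - ((t : ℂ))⁻¹ • a)) atTop (nhds 1) := by
  have h0 : Tendsto (fun t : ℝ => ((t : ℂ))⁻¹ • a) atTop (nhds 0) := by
    simpa using hlp_tendsto_inv_ofReal.smul_const a
  have hsub : Tendsto (fun t : ℝ => (1 : A) - ((t : ℂ))⁻¹ • a) atTop (nhds 1) := by
    simpa using tendsto_const_nhds.sub h0
  have hcont : ContinuousAt Ring.inverse ((1 : Aˣ) : A) := NormedRing.inverse_continuousAt 1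
  have := hcont.tendsto.comp hsub
  simpa [Function.comp_def] using this

lemma hlp_tendsto_resolvent_zero (a : A) :
    Tendsto (fun t : ℝ => Ring.inverse ((t : ℂ) • (1 : A) - a)) atTop (nhds 0) := by
  have hev : ∀ᶠ t : ℝ in atTop,
      ((t : ℂ))⁻¹ • Ring.inverse ((1 : A) - ((t : ℂ))⁻¹ • a)
        = Ring.inverse ((t : ℂ) • (1 : A) - a) := by
    filter_upwards [eventually_gt_atTop (max ‖a‖ 0)] with t ht
    have h1 : ‖a‖ < ‖(t : ℂ)‖ := by
      rw [Complex.norm_real]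
      exact lt_of_le_of_lt (le_max_left _ _) (lt_of_lt_of_le ht (le_abs_self t))
    rw [hlp_ringInverse_eq h1]
  have hlim : Tendsto (fun t : ℝ =>
      ((t : ℂ))⁻¹ • Ring.inverse ((1 : A) - ((t : ℂ))⁻¹ • a)) atTop (nhds 0) := by
    have := hlp_tendsto_inv_ofReal.smul (hlp_tendsto_oneSub_inverse a)
    simpa using this
  exact hlim.congr' hev

lemma hlp_tendsto_smul_resolvent_one (a : A) :
    Tendsto (fun t : ℝ => (t : ℂ) • Ring.inverse ((t : ℂ) • (1 : A) - a)) atTop (nhds 1) := by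
  have hev : ∀ᶠ t : ℝ in atTop,
      Ring.inverse ((1 : A) - ((t : ℂ))⁻¹ • a)
        = (t : ℂ) • Ring.inverse ((t : ℂ) • (1 : A) - a) := by
    filter_upwards [eventually_gt_atTop (max ‖a‖ 0)] with t ht
    have ht0 : (0 : ℝ) < t := lt_of_le_of_lt (le_max_right _ _) ht
    have htne : (t : ℂ) ≠ 0 := by exact_mod_cast ht0.ne'
    have h1 : ‖a‖ < ‖(t : ℂ)‖ := by
      rw [Complex.norm_real]
      exact lt_of_le_of_lt (le_max_left _ _) (lt_of_lt_of_le ht (le_abs_self t))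
    rw [hlp_ringInverse_eq h1, smul_smul, mul_inv_cancel₀ htne, one_smul]
  exact (hlp_tendsto_oneSub_inverse a).congr' hev

lemma hlp_coeffs_vanish {E : Type*} [NormedAddCommGroup E] [NormedSpace ℂ E] :
    ∀ (n : ℕ) (B : ℕ → E),
      Tendsto (fun t : ℝ => ∑ k ∈ Finset.range n, (t : ℂ) ^ k • B k) atTop (nhds 0) →
      ∀ k < n, B k = 0 := by
  intro n
  induction n with
  | zero => intro B _ k hk; omega
  | succ n ih =>
    intro B h
    have hBn : B n = 0 := by
      have h1 : Tendsto (fun t : ℝ =>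
          (((t : ℂ))⁻¹) ^ n • ∑ k ∈ Finset.range (n + 1), (t : ℂ) ^ k • B k)
          atTop (nhds 0) := by
        have := (hlp_tendsto_inv_ofReal.pow n).smul h
        simpa using this
      have h2 : Tendsto (fun t : ℝ =>
          (((t : ℂ))⁻¹) ^ n • ∑ k ∈ Finset.range (n + 1), (t : ℂ) ^ k • B k)
          atTop (nhds (B n)) := by
        have hev : ∀ᶠ t : ℝ in atTop,
            (B n + ∑ k ∈ Finset.range n, (((t : ℂ))⁻¹) ^ (n - k) • B k)
              = (((t : ℂ))⁻¹) ^ n • ∑ k ∈ Finset.range (n + 1), (t : ℂ) ^ k • B k := by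
          filter_upwards [eventually_gt_atTop 0] with t ht
          have htne : (t : ℂ) ≠ 0 := by exact_mod_cast ht.ne'
          rw [Finset.smul_sum, Finset.sum_range_succ, smul_smul, inv_pow,
            inv_mul_cancel₀ (pow_ne_zero n htne), one_smul, add_comm]
          congr 1
          apply Finset.sum_congr rfl
          intro k hk
          rw [Finset.mem_range] at hk
          rw [smul_smul]
          congr 1
          rw [pow_sub₀ _ (inv_ne_zero htne) hk.le, inv_pow, inv_pow, inv_inv]
        have hlim : Tendsto (fun t : ℝ =>
            B n + ∑ k ∈ Finset.range n, (((t : ℂ))⁻¹) ^ (n - k) • B k) atTop (nhds (B n)) := by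
          have hsum : Tendsto (fun t : ℝ =>
              ∑ k ∈ Finset.range n, (((t : ℂ))⁻¹) ^ (n - k) • B k) atTop (nhds 0) := by
            have h3 : Tendsto (fun t : ℝ =>
                ∑ k ∈ Finset.range n, (((t : ℂ))⁻¹) ^ (n - k) • B k) atTop
                (nhds (∑ k ∈ Finset.range n, (0 : E))) := by
              apply tendsto_finset_sum
              intro k hk
              rw [Finset.mem_range] at hk
              have hpow := hlp_tendsto_inv_ofReal.pow (n - k)
              have h0 : (0 : ℂ) ^ (n - k) = 0 := zero_pow (by omega)
              rw [h0] at hpow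
              simpa using hpow.smul_const (B k)
            simpa using h3
          simpa using tendsto_const_nhds.add hsum
        exact hlim.congr' hev
      exact tendsto_nhds_unique h2 h1
    have h' : Tendsto (fun t : ℝ => ∑ k ∈ Finset.range n, (t : ℂ) ^ k • B k)
        atTop (nhds 0) := by
      apply h.congr
      intro t
      rw [Finset.sum_range_succ, hBn, smul_zero, add_zero]
    intro k hk
    rcases Nat.lt_succ_iff_lt_or_eq.1 hk with h2 | h2
    · exact ih B h' k h2
    · rw [h2]; exact hBn

lemma hlp_divByMonic_eq_sum (T : Polynomial ℂ) {n : ℕ} (hn : T.natDegree ≤ n) (z : ℂ) :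
    (T - C (T.eval z)) /ₘ (X - C z)
      = ∑ k ∈ Finset.range n, C (z ^ k) *
          ∑ j ∈ Finset.range (n - k), C (T.coeff (j + k + 1)) * X ^ j := by
  have hroot : IsRoot (T - C (T.eval z)) z := by simp [IsRoot]
  have h1 : (X - C z) * ((T - C (T.eval z)) /ₘ (X - C z)) = T - C (T.eval z) :=
    mul_divByMonic_eq_iff_isRoot.2 hroot
  have hswap : (∑ k ∈ Finset.range n, C (z ^ k) *
        ∑ j ∈ Finset.range (n - k), C (T.coeff (j + k + 1)) * X ^ j)
      = ∑ i ∈ Finset.range (n + 1), C (T.coeff i) *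
          ∑ j ∈ Finset.range i, (C z) ^ j * X ^ (i - 1 - j) := by
    simp_rw [Finset.mul_sum]
    rw [Finset.sum_sigma', Finset.sum_sigma']
    refine Finset.sum_nbij' (fun p => ⟨p.2 + p.1 + 1, p.1⟩) (fun p => ⟨p.2, p.1 - 1 - p.2⟩)
      ?_ ?_ ?_ ?_ ?_
    · rintro ⟨k, j⟩ hp
      simp only [Finset.mem_sigma, Finset.mem_range] at hp ⊢
      omega
    · rintro ⟨i, j⟩ hp
      simp only [Finset.mem_sigma, Finset.mem_range] at hp ⊢
      omega
    · rintro ⟨k, j⟩ hp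
      simp only [Finset.mem_sigma, Finset.mem_range] at hp
      simp only [Sigma.mk.inj_iff, heq_eq_eq]
      exact ⟨trivial, by omega⟩
    · rintro ⟨i, j⟩ hp
      simp only [Finset.mem_sigma, Finset.mem_range] at hp
      simp only [Sigma.mk.inj_iff, heq_eq_eq]
      exact ⟨by omega, trivial⟩
    · rintro ⟨k, j⟩ hp
      simp only [Finset.mem_sigma, Finset.mem_range] at hp
      have hidx : j + k + 1 - 1 - k = j := by omega
      rw [hidx, ← C_pow]
      ring
  have h2 : (X - C z) * (∑ k ∈ Finset.range n, C (z ^ k) *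
        ∑ j ∈ Finset.range (n - k), C (T.coeff (j + k + 1)) * X ^ j)
      = T - C (T.eval z) := by
    rw [hswap, Finset.mul_sum]
    have hterm : ∀ i ∈ Finset.range (n + 1),
        (X - C z) * (C (T.coeff i) * ∑ j ∈ Finset.range i, (C z) ^ j * X ^ (i - 1 - j))
          = C (T.coeff i) * (X ^ i - (C z) ^ i) := by
      intro i _
      have hg := geom_sum₂_mul (C z) (X : Polynomial ℂ) i
      linear_combination (C (T.coeff i)) * (- hg)
    rw [Finset.sum_congr rfl hterm]
    have hT' : T = ∑ i ∈ Finset.range (n + 1), C (T.coeff i) * X ^ i := by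
      conv_lhs => rw [T.as_sum_range' (n + 1) (Nat.lt_succ_of_le hn)]
      apply Finset.sum_congr rfl
      intro i _
      rw [C_mul_X_pow_eq_monomial]
    have hev : C (T.eval z) = ∑ i ∈ Finset.range (n + 1), C (T.coeff i) * (C z) ^ i := by
      rw [eval_eq_sum_range' (Nat.lt_succ_of_le hn), map_sum]
      apply Finset.sum_congr rfl
      intro i _
      rw [map_mul, map_pow]
    calc ∑ i ∈ Finset.range (n + 1), C (T.coeff i) * (X ^ i - (C z) ^ i)
        = (∑ i ∈ Finset.range (n + 1), C (T.coeff i) * X ^ i)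
            - ∑ i ∈ Finset.range (n + 1), C (T.coeff i) * (C z) ^ i := by
          rw [← Finset.sum_sub_distrib]
          exact Finset.sum_congr rfl fun i _ => by ring
      _ = T - C (T.eval z) := by rw [← hT', ← hev]
  exact mul_left_cancel₀ (X_sub_C_ne_zero z) (h1.trans h2.symm)

end Helpers


/-- Let `V : ℓ²(ℤ₊) → ℓ²(ℤ₊)` be the isometry `V|k⟩ = |dk⟩` and `J, J̃` bounded
self-adjoint operators. If `V*(z−J)⁻¹V = (T'(z)/d)·(T(z) − J̃)⁻¹` for all `z` outside
a disk containing both spectra, then `V*T(J) = J̃V*` and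
`V*((T(z)−T(J))/(z−J))V = (T'(z)/d)·I`, where `(T(z)−T(J))/(z−J)` is the divided
difference polynomial `(T − T(z)) /ₘ (X − z)` evaluated at `J`. -/
theorem renormalization_consequences (d : ℕ) (hd : 2 ≤ d)
    (T : Polynomial ℂ) (hT : T.Monic) (hTdeg : T.natDegree = d)
    (J Jt V : lp (fun _ : ℕ => ℂ) 2 →L[ℂ] lp (fun _ : ℕ => ℂ) 2)
    (hJ : IsSelfAdjoint J) (hJt : IsSelfAdjoint Jt)
    (hViso : ∀ x, ‖V x‖ = ‖x‖)
    (hV : ∀ k : ℕ, V (lp.single 2 k (1 : ℂ)) = lp.single 2 (d * k) (1 : ℂ))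
    (R : ℝ) (hR : max ‖J‖ ‖Jt‖ < R)
    (hres : ∀ z : ℂ, R < ‖z‖ →
      adjoint V * Ring.inverse (z • 1 - J) * V
        = ((Polynomial.derivative T).eval z / (d : ℂ))
            • Ring.inverse ((T.eval z) • 1 - Jt)) :
    adjoint V * aeval J T = Jt * adjoint V ∧
    ∀ z : ℂ,
      adjoint V * aeval J ((T - C (T.eval z)) /ₘ (X - C z)) * V
        = ((Polynomial.derivative T).eval z / (d : ℂ)) • 1 := by
  classical
  have hVV : adjoint V * V = 1 := (norm_map_iff_adjoint_comp_self V).mp hViso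
  have hstarV : star V = adjoint V := star_eq_adjoint V
  have hstarVs : star (adjoint V) = V := by rw [← hstarV, star_star]
  have hTd0 : T.natDegree ≠ 0 := by rw [hTdeg]; omega
  have hder_lt : (Polynomial.derivative T).natDegree < d := by
    rw [← hTdeg]; exact natDegree_derivative_lt hTd0
  have hc_sum : ∀ z : ℂ, ((Polynomial.derivative T).eval z / (d : ℂ)) = ∑ k ∈ Finset.range d, ((Polynomial.derivative T).coeff k / (d : ℂ)) * z ^ k := by
    intro z
    rw [eval_eq_sum_range' hder_lt, Finset.sum_div]
    exact Finset.sum_congr rfl fun k _ => by ring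
  have hq : ∀ z : ℂ, aeval J ((T - C (T.eval z)) /ₘ (X - C z))
      = ∑ k ∈ Finset.range d, z ^ k • aeval J ((∑ j ∈ Finset.range (d - k), C (T.coeff (j + k + 1)) * X ^ j)) := by
    intro z
    rw [hlp_divByMonic_eq_sum T (le_of_eq hTdeg) z, map_sum]
    exact Finset.sum_congr rfl fun k _ => by
      rw [map_mul, aeval_C, ← Algebra.smul_def]
  have hP1 : ∀ z : ℂ, adjoint V * aeval J ((T - C (T.eval z)) /ₘ (X - C z)) * V
      = ∑ k ∈ Finset.range d, z ^ k • (adjoint V * aeval J ((∑ j ∈ Finset.range (d - k), C (T.coeff (j + k + 1)) * X ^ j)) * V) := by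
    intro z
    rw [hq z]
    simp only [Finset.mul_sum, Finset.sum_mul, mul_smul_comm, smul_mul_assoc]
  have hPS : ∀ z : ℂ, adjoint V * (star (aeval J T) * aeval J ((T - C (T.eval z)) /ₘ (X - C z))) * V
      = ∑ k ∈ Finset.range d, z ^ k • (adjoint V * (star (aeval J T) * aeval J ((∑ j ∈ Finset.range (d - k), C (T.coeff (j + k + 1)) * X ^ j))) * V) := by
    intro z
    rw [hq z]
    simp only [Finset.mul_sum, Finset.sum_mul, mul_smul_comm, smul_mul_assoc]
  -- resolvent limits
  have hR0 : Tendsto (fun t : ℝ => Ring.inverse (((t : ℝ) : ℂ) • 1 - J)) atTop (nhds 0) := hlp_tendsto_resolvent_zero J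
  have hR1 : Tendsto (fun t : ℝ => ((t : ℂ)) • Ring.inverse (((t : ℝ) : ℂ) • 1 - J)) atTop (nhds 1) :=
    hlp_tendsto_smul_resolvent_one J
  have hE0 : Tendsto (fun t : ℝ => (adjoint V * Ring.inverse (((t : ℝ) : ℂ) • 1 - J) * V)) atTop (nhds 0) := by
    have h1 : Tendsto (fun t : ℝ => adjoint V * Ring.inverse (((t : ℝ) : ℂ) • 1 - J) * V) atTop (nhds (adjoint V * 0 * V)) :=
      (tendsto_const_nhds.mul hR0).mul tendsto_const_nhds
    simpa using h1
  have hE1 : Tendsto (fun t : ℝ => ((t : ℂ)) • (adjoint V * Ring.inverse (((t : ℝ) : ℂ) • 1 - J) * V)) atTop (nhds 1) := by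
    have h1 : Tendsto (fun t : ℝ => adjoint V * (((t : ℂ)) • Ring.inverse (((t : ℝ) : ℂ) • 1 - J)) * V) atTop
        (nhds (adjoint V * 1 * V)) := (tendsto_const_nhds.mul hR1).mul tendsto_const_nhds
    have h3 : adjoint V * (1 : (lp (fun _ : ℕ => ℂ) 2 →L[ℂ] lp (fun _ : ℕ => ℂ) 2)) * V = 1 := by rw [mul_one, hVV]
    rw [h3] at h1
    apply h1.congr
    intro t
    simp only [mul_smul_comm, smul_mul_assoc]
  -- eventually facts
  have hdeg0 : 0 < T.degree := by
    rw [degree_eq_natDegree hT.ne_zero, hTdeg]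
    exact_mod_cast Nat.pos_of_ne_zero (by omega)
  have hnormT : Tendsto (fun t : ℝ => ‖T.eval ((t : ℂ))‖) atTop atTop := by
    apply Polynomial.tendsto_norm_atTop T hdeg0
    have h1 : (fun t : ℝ => ‖((t : ℂ))‖) = fun t : ℝ => |t| := by
      funext t; rw [Complex.norm_real]; rfl
    rw [h1]
    exact tendsto_abs_atTop_atTop
  have hEvGood : ∀ᶠ t : ℝ in atTop,
      (‖J‖ < t ∧ R < t ∧ 0 < t) ∧ ‖Jt‖ < ‖T.eval ((t : ℂ))‖ := by
    filter_upwards [eventually_gt_atTop (max (max ‖J‖ R) 0),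
      hnormT.eventually_gt_atTop ‖Jt‖] with t h1 h2
    exact ⟨⟨lt_of_le_of_lt (le_trans (le_max_left _ _) (le_max_left _ _)) h1,
      lt_of_le_of_lt (le_trans (le_max_right _ _) (le_max_left _ _)) h1,
      lt_of_le_of_lt (le_max_right _ _) h1⟩, h2⟩
  have hEV : ∀ᶠ t : ℝ in atTop,
      ((adjoint V * Ring.inverse (((t : ℝ) : ℂ) • 1 - J) * V) = ((Polynomial.derivative T).eval ((t : ℂ)) / (d : ℂ)) • Ring.inverse ((T.eval ((t : ℂ))) • 1 - Jt)) ∧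
      (Ring.inverse (((t : ℝ) : ℂ) • 1 - J) * (((t : ℂ)) • 1 - J) = 1) ∧
      ((((t : ℂ)) • 1 - J) * Ring.inverse (((t : ℝ) : ℂ) • 1 - J) = 1) ∧
      ((T.eval ((t : ℂ))) • Ring.inverse ((T.eval ((t : ℂ))) • 1 - Jt)
        = 1 + Jt * Ring.inverse ((T.eval ((t : ℂ))) • 1 - Jt)) := by
    filter_upwards [hEvGood] with t ht
    obtain ⟨⟨hJt1, hRt, ht0⟩, hJt2⟩ := ht
    have hnt : ‖J‖ < ‖((t : ℂ))‖ := by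
      rw [Complex.norm_real]
      exact lt_of_lt_of_le hJt1 (le_abs_self t)
    have hu1 : IsUnit (((t : ℂ)) • (1 : (lp (fun _ : ℕ => ℂ) 2 →L[ℂ] lp (fun _ : ℕ => ℂ) 2)) - J) := hlp_isUnit_smul_one_sub hnt
    have hu2 : IsUnit ((T.eval ((t : ℂ))) • (1 : (lp (fun _ : ℕ => ℂ) 2 →L[ℂ] lp (fun _ : ℕ => ℂ) 2)) - Jt) := hlp_isUnit_smul_one_sub hJt2
    refine ⟨?_, Ring.inverse_mul_cancel _ hu1, Ring.mul_inverse_cancel _ hu1, ?_⟩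
    · exact hres ((t : ℂ))
        (by rw [Complex.norm_real]; exact lt_of_lt_of_le hRt (le_abs_self t))
    · have h5 := Ring.mul_inverse_cancel _ hu2
      have h6 : ((T.eval ((t : ℂ))) • (1 : (lp (fun _ : ℕ => ℂ) 2 →L[ℂ] lp (fun _ : ℕ => ℂ) 2)) - Jt)
            * Ring.inverse ((T.eval ((t : ℂ))) • 1 - Jt)
          = (T.eval ((t : ℂ))) • Ring.inverse ((T.eval ((t : ℂ))) • 1 - Jt)
            - Jt * Ring.inverse ((T.eval ((t : ℂ))) • 1 - Jt) := by
        rw [sub_mul, smul_mul_assoc, one_mul]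
      rw [h6] at h5
      exact sub_eq_iff_eq_add.mp h5
  -- divided-difference operator identity at good t
  have hQev : ∀ᶠ t : ℝ in atTop,
      aeval J ((T - C (T.eval ((t : ℂ)))) /ₘ (X - C ((t : ℂ))))
        = (T.eval ((t : ℂ))) • Ring.inverse (((t : ℝ) : ℂ) • 1 - J) - Ring.inverse (((t : ℝ) : ℂ) • 1 - J) * aeval J T := by
    filter_upwards [hEV] with t hEVt
    obtain ⟨h1, h2, h3, h4⟩ := hEVt
    have hpoly : (X - C ((t : ℂ))) * ((T - C (T.eval ((t : ℂ)))) /ₘ (X - C ((t : ℂ))))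
        = T - C (T.eval ((t : ℂ))) :=
      mul_divByMonic_eq_iff_isRoot.2 (by simp [IsRoot])
    have hop : (J - ((t : ℂ)) • 1) * aeval J ((T - C (T.eval ((t : ℂ)))) /ₘ (X - C ((t : ℂ))))
        = aeval J T - (T.eval ((t : ℂ))) • 1 := by
      have h7 := congrArg (aeval J) hpoly
      rw [map_mul, map_sub, map_sub, aeval_X, aeval_C, aeval_C] at h7
      rw [← Algebra.algebraMap_eq_smul_one, ← Algebra.algebraMap_eq_smul_one]
      exact h7
    have h5 : Ring.inverse (((t : ℝ) : ℂ) • 1 - J) * ((J - ((t : ℂ)) • 1) *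
          aeval J ((T - C (T.eval ((t : ℂ)))) /ₘ (X - C ((t : ℂ)))))
        = Ring.inverse (((t : ℝ) : ℂ) • 1 - J) * (aeval J T - (T.eval ((t : ℂ))) • 1) := by rw [hop]
    have h6 : Ring.inverse (((t : ℝ) : ℂ) • 1 - J) * (J - ((t : ℂ)) • 1) = -1 := by
      have h8 : (J - ((t : ℂ)) • 1 : (lp (fun _ : ℕ => ℂ) 2 →L[ℂ] lp (fun _ : ℕ => ℂ) 2)) = -(((t : ℂ)) • 1 - J) := by rw [neg_sub]
      rw [h8, mul_neg, h2]
    rw [← mul_assoc, h6, neg_one_mul, neg_eq_iff_eq_neg] at h5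
    rw [h5, mul_sub, neg_sub, mul_smul_comm, mul_one]
  -- key smul identity at good t
  have hkey : ∀ᶠ t : ℝ in atTop,
      (T.eval ((t : ℂ))) • (adjoint V * Ring.inverse (((t : ℝ) : ℂ) • 1 - J) * V) = ((Polynomial.derivative T).eval ((t : ℂ)) / (d : ℂ)) • 1 + Jt * (adjoint V * Ring.inverse (((t : ℝ) : ℂ) • 1 - J) * V) := by
    filter_upwards [hEV] with t hEVt
    obtain ⟨h1, h2, h3, h4⟩ := hEVt
    rw [h1, smul_smul, mul_comm (T.eval ((t : ℂ))) (((Polynomial.derivative T).eval ((t : ℂ)) / (d : ℂ))), ← smul_smul, h4,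
      smul_add, mul_smul_comm]
  -- STEP 1
  have hstep1 : ∀ᶠ t : ℝ in atTop,
      (∑ k ∈ Finset.range d, ((t : ℂ)) ^ k • (adjoint V * aeval J ((∑ j ∈ Finset.range (d - k), C (T.coeff (j + k + 1)) * X ^ j)) * V - ((Polynomial.derivative T).coeff k / (d : ℂ)) • 1))
        = Jt * (adjoint V * Ring.inverse (((t : ℝ) : ℂ) • 1 - J) * V) - adjoint V * (Ring.inverse (((t : ℝ) : ℂ) • 1 - J) * aeval J T) * V := by
    filter_upwards [hQev, hkey] with t hQ hk
    calc ∑ k ∈ Finset.range d, ((t : ℂ)) ^ k • (adjoint V * aeval J ((∑ j ∈ Finset.range (d - k), C (T.coeff (j + k + 1)) * X ^ j)) * V - ((Polynomial.derivative T).coeff k / (d : ℂ)) • 1)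
        = (∑ k ∈ Finset.range d, ((t : ℂ)) ^ k • (adjoint V * aeval J ((∑ j ∈ Finset.range (d - k), C (T.coeff (j + k + 1)) * X ^ j)) * V))
            - (∑ k ∈ Finset.range d, (((Polynomial.derivative T).coeff k / (d : ℂ)) * ((t : ℂ)) ^ k)) • 1 := by
          rw [Finset.sum_smul, ← Finset.sum_sub_distrib]
          apply Finset.sum_congr rfl
          intro k _
          rw [smul_sub, smul_smul, mul_comm]
      _ = adjoint V * aeval J ((T - C (T.eval ((t : ℂ)))) /ₘ (X - C ((t : ℂ)))) * V
            - ((Polynomial.derivative T).eval ((t : ℂ)) / (d : ℂ)) • 1 := by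
          rw [hP1, hc_sum]
      _ = (T.eval ((t : ℂ))) • (adjoint V * Ring.inverse (((t : ℝ) : ℂ) • 1 - J) * V) - adjoint V * (Ring.inverse (((t : ℝ) : ℂ) • 1 - J) * aeval J T) * V
            - ((Polynomial.derivative T).eval ((t : ℂ)) / (d : ℂ)) • 1 := by
          rw [hQ]
          simp only [mul_sub, sub_mul, mul_smul_comm, smul_mul_assoc]
      _ = Jt * (adjoint V * Ring.inverse (((t : ℝ) : ℂ) • 1 - J) * V) - adjoint V * (Ring.inverse (((t : ℝ) : ℂ) • 1 - J) * aeval J T) * V := by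
          rw [hk]
          abel
  have hKzero : Tendsto (fun t : ℝ => adjoint V * (Ring.inverse (((t : ℝ) : ℂ) • 1 - J) * aeval J T) * V) atTop (nhds 0) := by
    have h1 : Tendsto (fun t : ℝ => adjoint V * (Ring.inverse (((t : ℝ) : ℂ) • 1 - J) * aeval J T) * V) atTop
        (nhds (adjoint V * ((0 : (lp (fun _ : ℕ => ℂ) 2 →L[ℂ] lp (fun _ : ℕ => ℂ) 2)) * aeval J T) * V)) :=
      (tendsto_const_nhds.mul (hR0.mul tendsto_const_nhds)).mul tendsto_const_nhds
    simpa using h1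
  have hlim1 : Tendsto (fun t : ℝ => Jt * (adjoint V * Ring.inverse (((t : ℝ) : ℂ) • 1 - J) * V) - adjoint V * (Ring.inverse (((t : ℝ) : ℂ) • 1 - J) * aeval J T) * V)
      atTop (nhds 0) := by
    have h1 : Tendsto (fun t : ℝ => Jt * (adjoint V * Ring.inverse (((t : ℝ) : ℂ) • 1 - J) * V)) atTop (nhds (Jt * 0)) :=
      tendsto_const_nhds.mul hE0
    simpa using h1.sub hKzero
  have hB : ∀ k < d, adjoint V * aeval J ((∑ j ∈ Finset.range (d - k), C (T.coeff (j + k + 1)) * X ^ j)) * V - ((Polynomial.derivative T).coeff k / (d : ℂ)) • 1 = 0 :=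
    hlp_coeffs_vanish d _ (hlim1.congr' (hstep1.mono fun t h => h.symm))
  have goal2 : ∀ z : ℂ, adjoint V * aeval J ((T - C (T.eval z)) /ₘ (X - C z)) * V
      = ((Polynomial.derivative T).eval z / (d : ℂ)) • 1 := by
    intro z
    rw [hP1 z]
    have h1 : ∀ k ∈ Finset.range d,
        z ^ k • (adjoint V * aeval J ((∑ j ∈ Finset.range (d - k), C (T.coeff (j + k + 1)) * X ^ j)) * V) = (((Polynomial.derivative T).coeff k / (d : ℂ)) * z ^ k) • (1 : (lp (fun _ : ℕ => ℂ) 2 →L[ℂ] lp (fun _ : ℕ => ℂ) 2)) := by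
      intro k hk
      rw [sub_eq_zero.mp (hB k (Finset.mem_range.mp hk)), smul_smul, mul_comm]
    rw [Finset.sum_congr rfl h1, ← Finset.sum_smul, ← hc_sum z]
  have hKR : ∀ᶠ t : ℝ in atTop, adjoint V * (Ring.inverse (((t : ℝ) : ℂ) • 1 - J) * aeval J T) * V = Jt * (adjoint V * Ring.inverse (((t : ℝ) : ℂ) • 1 - J) * V) := by
    filter_upwards [hstep1] with t h
    have h0 : (∑ k ∈ Finset.range d,
        ((t : ℂ)) ^ k • (adjoint V * aeval J ((∑ j ∈ Finset.range (d - k), C (T.coeff (j + k + 1)) * X ^ j)) * V - ((Polynomial.derivative T).coeff k / (d : ℂ)) • 1)) = 0 :=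
      Finset.sum_eq_zero fun k hk => by
        rw [hB k (Finset.mem_range.mp hk), smul_zero]
    rw [h0] at h
    exact (sub_eq_zero.mp h.symm).symm
  -- m1
  have hm1 : adjoint V * aeval J T * V = Jt := by
    have hL1 : Tendsto (fun t : ℝ => ((t : ℂ)) • (adjoint V * (Ring.inverse (((t : ℝ) : ℂ) • 1 - J) * aeval J T) * V)) atTop
        (nhds (adjoint V * aeval J T * V)) := by
      have h1 : Tendsto (fun t : ℝ => adjoint V * ((((t : ℂ)) • Ring.inverse (((t : ℝ) : ℂ) • 1 - J)) * aeval J T) * V) atTop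
          (nhds (adjoint V * ((1 : (lp (fun _ : ℕ => ℂ) 2 →L[ℂ] lp (fun _ : ℕ => ℂ) 2)) * aeval J T) * V)) :=
        (tendsto_const_nhds.mul (hR1.mul tendsto_const_nhds)).mul tendsto_const_nhds
      have h2 : adjoint V * ((1 : (lp (fun _ : ℕ => ℂ) 2 →L[ℂ] lp (fun _ : ℕ => ℂ) 2)) * aeval J T) * V = adjoint V * aeval J T * V := by rw [one_mul]
      rw [h2] at h1
      apply h1.congr
      intro t
      simp only [smul_mul_assoc, mul_smul_comm]
    have hL2 : Tendsto (fun t : ℝ => ((t : ℂ)) • (adjoint V * (Ring.inverse (((t : ℝ) : ℂ) • 1 - J) * aeval J T) * V)) atTop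
        (nhds Jt) := by
      have h1 : Tendsto (fun t : ℝ => Jt * (((t : ℂ)) • (adjoint V * Ring.inverse (((t : ℝ) : ℂ) • 1 - J) * V))) atTop
          (nhds (Jt * 1)) := tendsto_const_nhds.mul hE1
      rw [mul_one] at h1
      apply h1.congr'
      filter_upwards [hKR] with t h
      rw [h, mul_smul_comm]
    exact tendsto_nhds_unique hL1 hL2
  -- star facts
  have hstarRes : ∀ t : ℝ, star (Ring.inverse (((t : ℝ) : ℂ) • 1 - J)) = Ring.inverse (((t : ℝ) : ℂ) • 1 - J) := by
    intro t
    rw [← Ring.inverse_star]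
    congr 1
    rw [star_sub, star_smul, star_one, hJ.star_eq, Complex.star_def, Complex.conj_ofReal]
  have hstarE : ∀ t : ℝ, star ((adjoint V * Ring.inverse (((t : ℝ) : ℂ) • 1 - J) * V)) = (adjoint V * Ring.inverse (((t : ℝ) : ℂ) • 1 - J) * V) := by
    intro t
    rw [star_mul, star_mul, hstarV, hstarVs, hstarRes, mul_assoc]
  have hstarTJ : star (aeval J T) = star (aeval J T) := rfl
  have hKS : ∀ᶠ t : ℝ in atTop, adjoint V * (star (aeval J T) * Ring.inverse (((t : ℝ) : ℂ) • 1 - J)) * V = (adjoint V * Ring.inverse (((t : ℝ) : ℂ) • 1 - J) * V) * Jt := by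
    filter_upwards [hKR] with t h
    have h1 := congrArg star h
    simp only [star_mul, hstarV, hstarVs, hstarRes, hJt.star_eq, mul_assoc] at h1
    simp only [mul_assoc]
    exact h1
  -- STEP 2
  have hstep2 : ∀ᶠ t : ℝ in atTop,
      (∑ k ∈ Finset.range d,
          ((t : ℂ)) ^ k • (adjoint V * (star (aeval J T) * aeval J ((∑ j ∈ Finset.range (d - k), C (T.coeff (j + k + 1)) * X ^ j))) * V - ((Polynomial.derivative T).coeff k / (d : ℂ)) • Jt))
        = Jt * (adjoint V * Ring.inverse (((t : ℝ) : ℂ) • 1 - J) * V) * Jt - adjoint V * (star (aeval J T) * (Ring.inverse (((t : ℝ) : ℂ) • 1 - J) * aeval J T)) * V := by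
    filter_upwards [hQev, hkey, hKS] with t hQ hk hKSt
    calc ∑ k ∈ Finset.range d,
          ((t : ℂ)) ^ k • (adjoint V * (star (aeval J T) * aeval J ((∑ j ∈ Finset.range (d - k), C (T.coeff (j + k + 1)) * X ^ j))) * V - ((Polynomial.derivative T).coeff k / (d : ℂ)) • Jt)
        = (∑ k ∈ Finset.range d, ((t : ℂ)) ^ k • (adjoint V * (star (aeval J T) * aeval J ((∑ j ∈ Finset.range (d - k), C (T.coeff (j + k + 1)) * X ^ j))) * V))
            - (∑ k ∈ Finset.range d, (((Polynomial.derivative T).coeff k / (d : ℂ)) * ((t : ℂ)) ^ k)) • Jt := by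
          rw [Finset.sum_smul, ← Finset.sum_sub_distrib]
          apply Finset.sum_congr rfl
          intro k _
          rw [smul_sub, smul_smul, mul_comm]
      _ = adjoint V * (star (aeval J T) * aeval J ((T - C (T.eval ((t : ℂ)))) /ₘ (X - C ((t : ℂ))))) * V
            - ((Polynomial.derivative T).eval ((t : ℂ)) / (d : ℂ)) • Jt := by
          rw [hPS, hc_sum]
      _ = (T.eval ((t : ℂ))) • (adjoint V * (star (aeval J T) * Ring.inverse (((t : ℝ) : ℂ) • 1 - J)) * V)
            - adjoint V * (star (aeval J T) * (Ring.inverse (((t : ℝ) : ℂ) • 1 - J) * aeval J T)) * V - ((Polynomial.derivative T).eval ((t : ℂ)) / (d : ℂ)) • Jt := by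
          rw [hQ]
          simp only [mul_sub, sub_mul, mul_smul_comm, smul_mul_assoc]
      _ = Jt * (adjoint V * Ring.inverse (((t : ℝ) : ℂ) • 1 - J) * V) * Jt - adjoint V * (star (aeval J T) * (Ring.inverse (((t : ℝ) : ℂ) • 1 - J) * aeval J T)) * V := by
          rw [hKSt, ← smul_mul_assoc, hk, add_mul, smul_mul_assoc, one_mul]
          abel
  have hKzero2 : Tendsto (fun t : ℝ => adjoint V * (star (aeval J T) * (Ring.inverse (((t : ℝ) : ℂ) • 1 - J) * aeval J T)) * V)
      atTop (nhds 0) := by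
    have h1 : Tendsto (fun t : ℝ => adjoint V * (star (aeval J T) * (Ring.inverse (((t : ℝ) : ℂ) • 1 - J) * aeval J T)) * V) atTop
        (nhds (adjoint V * (star (aeval J T) * ((0 : (lp (fun _ : ℕ => ℂ) 2 →L[ℂ] lp (fun _ : ℕ => ℂ) 2)) * aeval J T)) * V)) :=
      (tendsto_const_nhds.mul (tendsto_const_nhds.mul
        (hR0.mul tendsto_const_nhds))).mul tendsto_const_nhds
    simpa using h1
  have hlim2 : Tendsto (fun t : ℝ =>
      Jt * (adjoint V * Ring.inverse (((t : ℝ) : ℂ) • 1 - J) * V) * Jt - adjoint V * (star (aeval J T) * (Ring.inverse (((t : ℝ) : ℂ) • 1 - J) * aeval J T)) * V) atTop (nhds 0) := by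
    have h1 : Tendsto (fun t : ℝ => Jt * (adjoint V * Ring.inverse (((t : ℝ) : ℂ) • 1 - J) * V) * Jt) atTop (nhds (Jt * 0 * Jt)) :=
      (tendsto_const_nhds.mul hE0).mul tendsto_const_nhds
    simpa using h1.sub hKzero2
  have hB2 : ∀ k < d, adjoint V * (star (aeval J T) * aeval J ((∑ j ∈ Finset.range (d - k), C (T.coeff (j + k + 1)) * X ^ j))) * V - ((Polynomial.derivative T).coeff k / (d : ℂ)) • Jt = 0 :=
    hlp_coeffs_vanish d _ (hlim2.congr' (hstep2.mono fun t h => h.symm))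
  have hKSR : ∀ᶠ t : ℝ in atTop,
      adjoint V * (star (aeval J T) * (Ring.inverse (((t : ℝ) : ℂ) • 1 - J) * aeval J T)) * V = Jt * (adjoint V * Ring.inverse (((t : ℝ) : ℂ) • 1 - J) * V) * Jt := by
    filter_upwards [hstep2] with t h
    have h0 : (∑ k ∈ Finset.range d,
        ((t : ℂ)) ^ k • (adjoint V * (star (aeval J T) * aeval J ((∑ j ∈ Finset.range (d - k), C (T.coeff (j + k + 1)) * X ^ j))) * V - ((Polynomial.derivative T).coeff k / (d : ℂ)) • Jt)) = 0 :=
      Finset.sum_eq_zero fun k hk => by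
        rw [hB2 k (Finset.mem_range.mp hk), smul_zero]
    rw [h0] at h
    exact (sub_eq_zero.mp h.symm).symm
  -- m2
  have hm2 : adjoint V * (star (aeval J T) * aeval J T) * V = Jt * Jt := by
    have hL1 : Tendsto (fun t : ℝ => ((t : ℂ)) • (adjoint V * (star (aeval J T) * (Ring.inverse (((t : ℝ) : ℂ) • 1 - J) * aeval J T)) * V))
        atTop (nhds (adjoint V * (star (aeval J T) * aeval J T) * V)) := by
      have h1 : Tendsto (fun t : ℝ => adjoint V * (star (aeval J T) * ((((t : ℂ)) • Ring.inverse (((t : ℝ) : ℂ) • 1 - J)) * aeval J T)) * V)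
          atTop (nhds (adjoint V * (star (aeval J T) * ((1 : (lp (fun _ : ℕ => ℂ) 2 →L[ℂ] lp (fun _ : ℕ => ℂ) 2)) * aeval J T)) * V)) :=
        (tendsto_const_nhds.mul (tendsto_const_nhds.mul
          (hR1.mul tendsto_const_nhds))).mul tendsto_const_nhds
      have h2 : adjoint V * (star (aeval J T) * ((1 : (lp (fun _ : ℕ => ℂ) 2 →L[ℂ] lp (fun _ : ℕ => ℂ) 2)) * aeval J T)) * V = adjoint V * (star (aeval J T) * aeval J T) * V := by
        rw [one_mul]
      rw [h2] at h1
      apply h1.congr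
      intro t
      simp only [smul_mul_assoc, mul_smul_comm]
    have hL2 : Tendsto (fun t : ℝ => ((t : ℂ)) • (adjoint V * (star (aeval J T) * (Ring.inverse (((t : ℝ) : ℂ) • 1 - J) * aeval J T)) * V))
        atTop (nhds (Jt * Jt)) := by
      have h1 : Tendsto (fun t : ℝ => Jt * (((t : ℂ)) • (adjoint V * Ring.inverse (((t : ℝ) : ℂ) • 1 - J) * V)) * Jt) atTop
          (nhds (Jt * 1 * Jt)) := (tendsto_const_nhds.mul hE1).mul tendsto_const_nhds
      rw [mul_one] at h1
      apply h1.congr'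
      filter_upwards [hKSR] with t h
      rw [h]
      simp only [smul_mul_assoc, mul_smul_comm]
    exact tendsto_nhds_unique hL1 hL2
  -- mbar
  have hmbar : adjoint V * star (aeval J T) * V = Jt := by
    have h1 := congrArg star hm1
    simp only [star_mul, hstarV, hstarVs, mul_assoc] at h1
    rw [hJt.star_eq] at h1
    rw [mul_assoc]
    exact h1
  -- commutation of TJ and S
  have hTJsum : aeval J T = ∑ i ∈ Finset.range (d + 1), T.coeff i • J ^ i :=
    aeval_eq_sum_range' (by omega : T.natDegree < d + 1) J
  have hSsum : star (aeval J T) = ∑ i ∈ Finset.range (d + 1), (starRingEnd ℂ) (T.coeff i) • J ^ i := by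
    rw [hTJsum, star_sum]
    apply Finset.sum_congr rfl
    intro i _
    rw [star_smul, star_pow, hJ.star_eq, Complex.star_def]
  have hcommTS : aeval J T * star (aeval J T) = star (aeval J T) * aeval J T := by
    rw [hSsum, hTJsum, Finset.sum_mul_sum, Finset.sum_mul_sum]
    rw [Finset.sum_comm]
    apply Finset.sum_congr rfl
    intro i _
    apply Finset.sum_congr rfl
    intro j _
    simp only [smul_mul_assoc, mul_smul_comm, smul_smul]
    rw [mul_comm ((starRingEnd ℂ) (T.coeff i)) (T.coeff j), pow_mul_comm]
  -- final computation
  have hNstar : (adjoint V * aeval J T - Jt * adjoint V) * star (adjoint V * aeval J T - Jt * adjoint V) = 0 := by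
    have hstarN : star (adjoint V * aeval J T - Jt * adjoint V) = star (aeval J T) * V - V * Jt := by
      rw [star_sub, star_mul, star_mul, hstarVs, hJt.star_eq]
    rw [hstarN]
    have expand : (adjoint V * aeval J T - Jt * adjoint V) * (star (aeval J T) * V - V * Jt)
        = adjoint V * (aeval J T * star (aeval J T)) * V - (adjoint V * aeval J T * V) * Jt - Jt * (adjoint V * star (aeval J T) * V)
          + Jt * (adjoint V * V) * Jt := by
      noncomm_ring
    rw [expand, hcommTS, hm2, hm1, hmbar, hVV, mul_one]
    noncomm_ring
  have hN : adjoint V * aeval J T - Jt * adjoint V = 0 := by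
    have h2 := CStarRing.norm_star_mul_self (x := star (adjoint V * aeval J T - Jt * adjoint V))
    rw [star_star, hNstar, norm_zero] at h2
    have h3 : ‖star (adjoint V * aeval J T - Jt * adjoint V)‖ = 0 := mul_self_eq_zero.mp h2.symm
    have h4 : star (adjoint V * aeval J T - Jt * adjoint V) = 0 := norm_eq_zero.mp h3
    calc adjoint V * aeval J T - Jt * adjoint V = star (star (adjoint V * aeval J T - Jt * adjoint V)) := (star_star _).symm
      _ = 0 := by rw [h4, star_zero]
  exact ⟨sub_eq_zero.mp hN, goal2⟩
end
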